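/- arXiv:1902.08109 — 2 statements merged into one kernel-verified Lean document; each statement's English description precedes it below -/
import Mathlib

section
/- Let b ≥ 2 be an integer and c > 0. Then lim_{h→∞} h·( Σ_{k=0}^{h} e^{c k/h} b^{-k} - b/(b-1) ) = c·b/(b-1)². -/
open Filter Finset
open scoped Topology

/-! The summand is `q_h ^ k` with `q_h = e^{c/h} / b`, so the sum is a finite geometric series.
In closed form, `h (∑ - b/(b-1))` becomes `b · h (e^{c/h} - 1) / ((b - e^{c/h})(b - 1))` minus a
tail `h q_h^{h+1} · b/(b - e^{c/h})`. Since `e^{c/h}` is the value at `1/h` of `t ↦ e^{ct}`, whose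
derivative at `0` is `c`, `h (e^{c/h} - 1) → c`; and `h q_h^{h+1} = e^{c + c/h} b⁻¹ · h b^{-h} → 0`. -/

lemma geom_sum_div_sub_div_sub_one {B E : ℝ} (hB₀ : B ≠ 0) (hB₁ : B ≠ 1) (hEB : E ≠ B)
    (n : ℕ) :
    ∑ k ∈ range n, (E / B) ^ k - B / (B - 1)
      = B * (E - 1) / ((B - E) * (B - 1)) - (E / B) ^ n * (B / (B - E)) := by
  have hq : E / B ≠ 1 := by rwa [ne_eq, div_eq_one_iff_eq hB₀]
  have hBE : B - E ≠ 0 := sub_ne_zero.mpr hEB.symm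
  have hB₁' : B - 1 ≠ 0 := sub_ne_zero.mpr hB₁
  rw [geom_sum_eq hq]
  field_simp
  ring

lemma tendsto_natCast_mul_exp_div_sub_one (c : ℝ) :
    Tendsto (fun n : ℕ => (n : ℝ) * (Real.exp (c / n) - 1)) atTop (𝓝 c) := by
  have hderiv : HasDerivAt (fun t => Real.exp (c * t)) c 0 := by
    simpa using ((hasDerivAt_id (0 : ℝ)).const_mul c).exp
  have hinv : Tendsto (fun n : ℕ => (n : ℝ)⁻¹) atTop (𝓝[≠] 0) :=
    (tendsto_inv_atTop_nhdsGT_zero.mono_right (nhdsGT_le_nhdsNE 0)).comp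
      tendsto_natCast_atTop_atTop
  refine ((hasDerivAt_iff_tendsto_slope_zero.mp hderiv).comp hinv).congr fun n => ?_
  simp [div_eq_mul_inv]

lemma tendsto_natCast_mul_exp_div_div_pow_succ (c : ℝ) {B : ℝ} (hB : 1 < B) :
    Tendsto (fun n : ℕ => (n : ℝ) * (Real.exp (c / n) / B) ^ (n + 1)) atTop (𝓝 0) := by
  have hexp : Tendsto (fun n : ℕ => Real.exp (c + c / n)) atTop (𝓝 (Real.exp c)) := by
    simpa using ((tendsto_const_div_atTop_nhds_zero_nat c).const_add c).rexp
  have hgeom : Tendsto (fun n : ℕ => (n : ℝ) * B⁻¹ ^ n) atTop (𝓝 0) :=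
    tendsto_self_mul_const_pow_of_lt_one (by positivity) (inv_lt_one_of_one_lt₀ hB)
  have hprod := (hexp.div_const B).mul hgeom
  rw [mul_zero] at hprod
  refine hprod.congr' ?_
  filter_upwards [eventually_ne_atTop 0] with n hn
  have hn' : (n : ℝ) ≠ 0 := Nat.cast_ne_zero.mpr hn
  have hpow : Real.exp (c / n) ^ (n + 1) = Real.exp (c + c / n) := by
    rw [← Real.exp_nat_mul]
    congr 1
    field_simp
    push_cast
    ring
  rw [div_pow, hpow, pow_succ, inv_pow]
  field_simp

lemma tendsto_natCast_mul_geom_sum_sub {B c : ℝ} (hB : 1 < B) (E : ℕ → ℝ)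
    (hE : Tendsto (fun n : ℕ => (n : ℝ) * (E n - 1)) atTop (𝓝 c))
    (htail : Tendsto (fun n : ℕ => (n : ℝ) * (E n / B) ^ (n + 1)) atTop (𝓝 0)) :
    Tendsto (fun n : ℕ => (n : ℝ) * (∑ k ∈ range (n + 1), (E n / B) ^ k - B / (B - 1)))
      atTop (𝓝 (c * B / (B - 1) ^ 2)) := by
  have hE₁ : Tendsto E atTop (𝓝 1) := by
    have hlim₁ := (hE.mul (tendsto_inv_atTop_zero.comp tendsto_natCast_atTop_atTop)).const_add 1
    rw [mul_zero, add_zero] at hlim₁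
    refine hlim₁.congr' ?_
    filter_upwards [eventually_ne_atTop 0] with n hn
    have hn' : (n : ℝ) ≠ 0 := Nat.cast_ne_zero.mpr hn
    simp only [Function.comp_apply]
    field_simp
    ring
  have hB₁ : B - 1 ≠ 0 := sub_ne_zero.mpr hB.ne'
  have hden : Tendsto (fun n => B - E n) atTop (𝓝 (B - 1)) := tendsto_const_nhds.sub hE₁
  have hlim : Tendsto (fun n : ℕ => B * (n * (E n - 1)) / ((B - E n) * (B - 1))
      - n * (E n / B) ^ (n + 1) * (B / (B - E n))) atTop
      (𝓝 (B * c / ((B - 1) * (B - 1)) - 0 * (B / (B - 1)))) :=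
    ((hE.const_mul B).div (hden.mul_const (B - 1)) (mul_ne_zero hB₁ hB₁)).sub
      (htail.mul (tendsto_const_nhds.div hden hB₁))
  convert hlim.congr' ?_ using 2
  · rw [zero_mul, sub_zero]
    field_simp
  filter_upwards [hE₁.eventually_ne hB.ne] with n hn
  rw [geom_sum_div_sub_div_sub_one (by positivity) hB.ne' hn]
  ring

theorem geometric_sum_second_order_general (b : ℕ) (hb : 2 ≤ b) (c : ℝ) :
    Tendsto (fun h : ℕ =>
        (h : ℝ) * (∑ k ∈ Finset.range (h + 1),
          Real.exp (c * k / h) * ((b : ℝ) ^ k)⁻¹ - b / (b - 1)))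
      atTop (𝓝 (c * b / (b - 1) ^ 2)) := by
  have hb₁ : (1 : ℝ) < b := by exact_mod_cast hb
  have hgeom : ∀ h k : ℕ,
      Real.exp (c * k / h) * ((b : ℝ) ^ k)⁻¹ = (Real.exp (c / h) / b) ^ k := by
    intro h k
    rw [div_pow, div_eq_mul_inv _ ((b : ℝ) ^ k), ← Real.exp_nat_mul, mul_div_assoc']
    ring_nf
  simpa only [hgeom] using tendsto_natCast_mul_geom_sum_sub hb₁ _
    (tendsto_natCast_mul_exp_div_sub_one c) (tendsto_natCast_mul_exp_div_div_pow_succ c hb₁)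

/-- Second-order evaluation of a geometric-type sum appearing in percolation on
complete `b`-ary trees: `h (∑_{k=0}^h e^{ck/h} b^{-k} - b/(b-1)) → c b/(b-1)²`. -/
theorem geometric_sum_second_order (b : ℕ) (hb : 2 ≤ b) (c : ℝ) (hc : 0 < c) :
    Tendsto (fun h : ℕ =>
        (h : ℝ) * (∑ k ∈ Finset.range (h + 1),
          Real.exp (c * k / h) * ((b : ℝ) ^ k)⁻¹ - b / (b - 1)))
      atTop (𝓝 (c * b / (b - 1) ^ 2)) :=
  geometric_sum_second_order_general b hb c
end

section
/- Let b ≥ 2 and h ∈ ℕ with h - m ≥ 0 where m = 2⌊log_b h⌋, let n_{h,1} = (b^{h-m+1} - 1)/(b-1) be the number of vertices of a complete b-ary subtree of height h - m, and let c > 0. Then E[C_{h,1}] = n_{h,1} e^{-c} + n_{h,1} h^{-1} (b-1)^{-1} c e^{-c} + n_{h,1} m h^{-1} c e^{-c} + o(n_{h,1} h^{-1}) as h → ∞, where C_{h,1} is the number of vertices in the root cluster of that subtree under Bernoulli bond percolation with parameter p_h = e^{-c/h}. -/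
/-!
With `q = b e^{-c/h}` the expected cluster size is the geometric sum
`∑_{k ≤ h-m} q^k = (q^{h-m+1} - 1) / (q - 1)`, where `q^{h-m+1} = b^{h-m+1} e^{-c} e^{c(m-1)/h}`.
After division by `n_{h,1} / h` the error becomes an explicit rational expression in
`h (1 - e^{-c/h}) → c`, `h (e^{c(m-1)/h} - 1) - c (m-1) → 0` (second-order Taylor, as `m² / h → 0`),
`(m-1) / h → 0` and `h / (b^{h-m+1} - 1) → 0` (as `b^m ≤ h²`), and its limit
`e^{-c} (b c / (b-1) - c / (b-1) - c)` vanishes.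
-/

open Filter Real Finset
open scoped Topology

theorem Nat.two_mul_log_le_self (b n : ℕ) : 2 * Nat.log b n ≤ n := by
  rcases le_or_gt b 1 with hb | hb
  · simp [Nat.log_of_left_le_one hb]
  rcases eq_or_ne n 0 with rfl | hn
  · simp
  calc 2 * Nat.log b n ≤ b * Nat.log b n := Nat.mul_le_mul_right _ hb
    _ ≤ b ^ Nat.log b n := Nat.mul_le_pow hb.ne' _
    _ ≤ n := Nat.pow_log_le_self b hn

theorem Nat.pow_succ_le_pow_sub_two_mul_log_mul_sq (b : ℕ) {n : ℕ} (hn : n ≠ 0) :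
    b ^ (n + 1) ≤ b ^ (n - 2 * Nat.log b n + 1) * n ^ 2 := by
  calc b ^ (n + 1) = b ^ (n - 2 * Nat.log b n + 1) * (b ^ Nat.log b n) ^ 2 := by
        rw [← pow_mul, ← pow_add, mul_comm (Nat.log b n)]
        congr 1
        have := Nat.two_mul_log_le_self b n
        omega
    _ ≤ b ^ (n - 2 * Nat.log b n + 1) * n ^ 2 := by
        gcongr
        exact Nat.pow_log_le_self b hn

theorem tendsto_natLog_pow_div_natCast {b : ℕ} (hb : 1 < b) (k : ℕ) :
    Tendsto (fun n : ℕ => (Nat.log b n : ℝ) ^ k / n) atTop (𝓝 0) := by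
  have hlogb : 0 < Real.log b := Real.log_pos (by exact_mod_cast hb)
  have hlim := ((Real.tendsto_pow_log_div_mul_add_atTop 1 0 k one_ne_zero).comp
    tendsto_natCast_atTop_atTop).mul_const ((Real.log b)⁻¹ ^ k)
  rw [zero_mul] at hlim
  refine squeeze_zero (fun n => by positivity) (fun n => ?_) hlim
  calc (Nat.log b n : ℝ) ^ k / n ≤ (Real.log n / Real.log b) ^ k / n := by
        gcongr
        exact Real.natLog_le_logb n b
    _ = _ := by simp only [Function.comp_apply, one_mul, add_zero]; ring

theorem tendsto_mul_two_mul_natLog_sub_one_div {b : ℕ} (hb : 1 < b) (c : ℝ) :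
    Tendsto (fun n : ℕ => c * (((2 * Nat.log b n : ℕ) : ℝ) - 1) / n) atTop (𝓝 0) := by
  have h := ((tendsto_natLog_pow_div_natCast hb 1).const_mul (2 * c)).sub
    ((tendsto_natLog_pow_div_natCast hb 0).const_mul c)
  simp only [mul_zero, sub_zero] at h
  refine h.congr fun n => ?_
  push_cast
  ring

theorem tendsto_sq_mul_two_mul_natLog_sub_one_div {b : ℕ} (hb : 1 < b) (c : ℝ) :
    Tendsto (fun n : ℕ => (c * (((2 * Nat.log b n : ℕ) : ℝ) - 1)) ^ 2 / n) atTop (𝓝 0) := by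
  have h := (((tendsto_natLog_pow_div_natCast hb 2).const_mul (4 * c ^ 2)).sub
    ((tendsto_natLog_pow_div_natCast hb 1).const_mul (4 * c ^ 2))).add
    ((tendsto_natLog_pow_div_natCast hb 0).const_mul (c ^ 2))
  simp only [mul_zero, sub_zero, add_zero] at h
  refine h.congr fun n => ?_
  push_cast
  ring

theorem tendsto_natCast_div_pow_sub_two_mul_log_sub_one {b : ℕ} (hb : 1 < b) :
    Tendsto (fun n : ℕ => (n : ℝ) / ((b : ℝ) ^ (n - 2 * Nat.log b n + 1) - 1)) atTop (𝓝 0) := by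
  have hb' : (2 : ℝ) ≤ b := by exact_mod_cast hb
  have hP (n : ℕ) : (2 : ℝ) ≤ (b : ℝ) ^ (n - 2 * Nat.log b n + 1) :=
    hb'.trans (le_self_pow₀ (by linarith) (Nat.succ_ne_zero _))
  have hlim := (tendsto_pow_const_div_const_pow_of_one_lt 3 (by linarith : (1 : ℝ) < b)).const_mul 2
  rw [mul_zero] at hlim
  refine squeeze_zero' (Eventually.of_forall fun n => div_nonneg n.cast_nonneg
    (by linarith [hP n])) ?_ hlim
  filter_upwards [eventually_ne_atTop 0] with n hn
  have hpow : (b : ℝ) ^ n ≤ (b : ℝ) ^ (n - 2 * Nat.log b n + 1) * n ^ 2 := by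
    have := Nat.pow_succ_le_pow_sub_two_mul_log_mul_sq b hn
    calc (b : ℝ) ^ n ≤ (b : ℝ) ^ (n + 1) := pow_le_pow_right₀ (by linarith) n.le_succ
      _ ≤ _ := by exact_mod_cast this
  have hPn := hP n
  -- `n / (P - 1) ≤ 2 n / P ≤ 2 n³ / b^n`, using `P ≥ 2` and `b^n ≤ P n²`
  rw [mul_div_assoc', div_le_div_iff₀ (by linarith) (by positivity)]
  have hn0 : (0 : ℝ) ≤ n := n.cast_nonneg
  nlinarith [mul_le_mul_of_nonneg_left hpow hn0, mul_nonneg hn0 (pow_nonneg hn0 2)]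

theorem tendsto_natCast_mul_exp_div_sub_one_sub {a : ℕ → ℝ}
    (ha : Tendsto (fun n : ℕ => a n ^ 2 / n) atTop (𝓝 0)) :
    Tendsto (fun n : ℕ => (n : ℝ) * (exp (a n / n) - 1) - a n) atTop (𝓝 0) := by
  have hsq : Tendsto (fun n : ℕ => (a n / n) ^ 2) atTop (𝓝 0) := by
    have := ha.mul (tendsto_inv_atTop_zero.comp tendsto_natCast_atTop_atTop)
    rw [zero_mul] at this
    exact this.congr fun n => by simp only [Function.comp_apply]; ring
  refine squeeze_zero_norm' ?_ ha
  filter_upwards [eventually_ne_atTop 0, hsq.eventually (eventually_le_nhds one_pos)]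
    with n hn hs
  have hn' : (0 : ℝ) < n := by positivity
  calc ‖(n : ℝ) * (exp (a n / n) - 1) - a n‖ = n * |exp (a n / n) - 1 - a n / n| := by
        rw [Real.norm_eq_abs, ← abs_of_pos hn', ← abs_mul, abs_of_pos hn']
        congr 1
        field_simp
    _ ≤ n * (a n / n) ^ 2 := by
        gcongr
        exact Real.abs_exp_sub_one_sub_id_le ((sq_le_one_iff_abs_le_one _).1 hs)
    _ = a n ^ 2 / n := by field_simp

theorem tendsto_natCast_mul_one_sub_exp_neg_div (c : ℝ) :
    Tendsto (fun n : ℕ => (n : ℝ) * (1 - exp (-c / n))) atTop (𝓝 c) := by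
  have h := tendsto_natCast_mul_exp_div_sub_one_sub (a := fun _ => -c)
    (tendsto_const_div_atTop_nhds_zero_nat _)
  simpa using (h.neg.const_add c).congr fun n => by ring

theorem sum_range_pow_mul_exp_neg_mul_div {b c : ℝ} {h m : ℕ} (hm : m ≤ h) (hh : h ≠ 0)
    (hq : b * exp (-c / h) - 1 ≠ 0) :
    ∑ k ∈ range (h - m + 1), b ^ k * exp (-c * k / h)
      = (b ^ (h - m + 1) * (exp (-c) * exp (c * (m - 1) / h)) - 1) / (b * exp (-c / h) - 1) := by
  have hterm (k : ℕ) : b ^ k * exp (-c * k / h) = (b * exp (-c / h)) ^ k := by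
    rw [mul_pow, ← Real.exp_nat_mul]
    ring_nf
  simp_rw [hterm]
  rw [geom_sum_eq (sub_ne_zero.1 hq), mul_pow, ← Real.exp_nat_mul, ← Real.exp_add]
  congr 4
  push_cast [Nat.cast_sub hm]
  field_simp
  ring

/-- The normalized error of the expansion, written in terms of `x = e^{-c/h}`,
`E = e^{c(m-1)/h}` and `P = b^{h-m+1}` so that every factor has an elementary limit. -/
noncomputable def clusterErrorExpansion (b c h m P x E : ℝ) : ℝ :=
  exp (-c) * ((b - 1) * (h * (E - 1) - c * (m - 1)) / (b * x - 1)
      + (1 + c * (m - 1) / h) * (b * (h * (1 - x))) / (b * x - 1) - c / (b - 1) - c)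
    + h / (P - 1) * ((b - 1) / (b * x - 1)) * (exp (-c) * E - 1)

theorem clusterError_eq_expansion {b c h m P x E : ℝ} (hb : b - 1 ≠ 0) (hh : h ≠ 0)
    (hq : b * x - 1 ≠ 0) (hP : P - 1 ≠ 0) :
    ((P * (exp (-c) * E) - 1) / (b * x - 1) - (P - 1) / (b - 1) * exp (-c)
        - (P - 1) / (b - 1) * h⁻¹ * (b - 1)⁻¹ * c * exp (-c)
        - (P - 1) / (b - 1) * m * h⁻¹ * c * exp (-c)) / ((P - 1) / (b - 1) * h⁻¹)
      = clusterErrorExpansion b c h m P x E := by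
  unfold clusterErrorExpansion
  field_simp
  ring

theorem tendsto_clusterErrorExpansion {ι : Type*} {l : Filter ι} {b c : ℝ} (hb : b - 1 ≠ 0)
    {h m P x E : ι → ℝ}
    (hx : Tendsto (fun i => b * x i - 1) l (𝓝 (b - 1)))
    (hu : Tendsto (fun i => h i * (1 - x i)) l (𝓝 c))
    (hs : Tendsto (fun i => c * (m i - 1) / h i) l (𝓝 0))
    (hw : Tendsto (fun i => h i * (E i - 1) - c * (m i - 1)) l (𝓝 0))
    (hE : Tendsto E l (𝓝 1))
    (hP : Tendsto (fun i => h i / (P i - 1)) l (𝓝 0)) :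
    Tendsto (fun i => clusterErrorExpansion b c (h i) (m i) (P i) (x i) (E i)) l (𝓝 0) := by
  have hq : Tendsto (fun i => (b - 1) / (b * x i - 1)) l (𝓝 ((b - 1) / (b - 1))) :=
    tendsto_const_nhds.div hx hb
  have hlim := (((((hw.const_mul (b - 1)).div hx hb).add
      (((hs.const_add 1).mul (hu.const_mul b)).div hx hb)).sub_const (c / (b - 1))).sub_const
      c |>.const_mul (exp (-c))).add ((hP.mul hq).mul ((hE.const_mul (exp (-c))).sub_const 1))
  unfold clusterErrorExpansion
  convert hlim using 2
  · rfl
  · field_simp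
    ring

theorem regular_subtree_cluster_expectation_general (b : ℕ) (hb : 2 ≤ b) (c : ℝ) :
    Tendsto (fun h : ℕ =>
        ((∑ k ∈ Finset.range (h - 2 * Nat.log b h + 1),
            (b : ℝ) ^ k * Real.exp (-c * k / h))
          - (((b : ℝ) ^ (h - 2 * Nat.log b h + 1) - 1) / (b - 1)) * Real.exp (-c)
          - (((b : ℝ) ^ (h - 2 * Nat.log b h + 1) - 1) / (b - 1)) * (h : ℝ)⁻¹
              * ((b : ℝ) - 1)⁻¹ * c * Real.exp (-c)
          - (((b : ℝ) ^ (h - 2 * Nat.log b h + 1) - 1) / (b - 1))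
              * (2 * Nat.log b h : ℕ) * (h : ℝ)⁻¹ * c * Real.exp (-c))
        / ((((b : ℝ) ^ (h - 2 * Nat.log b h + 1) - 1) / (b - 1)) * (h : ℝ)⁻¹))
      atTop (𝓝 0) := by
  have hb1 : (1 : ℝ) < b := by exact_mod_cast hb
  have hb1' : (b : ℝ) - 1 ≠ 0 := (sub_pos.2 hb1).ne'
  have hx : Tendsto (fun h : ℕ => (b : ℝ) * exp (-c / h) - 1) atTop (𝓝 (b - 1)) := by
    simpa using ((tendsto_exp_nhds_zero_nhds_one.comp
      (tendsto_const_div_atTop_nhds_zero_nat (-c))).const_mul (b : ℝ)).sub_const 1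
  have hs := tendsto_mul_two_mul_natLog_sub_one_div hb c
  refine (tendsto_clusterErrorExpansion hb1' hx (tendsto_natCast_mul_one_sub_exp_neg_div c) hs
    (tendsto_natCast_mul_exp_div_sub_one_sub (tendsto_sq_mul_two_mul_natLog_sub_one_div hb c))
    (tendsto_exp_nhds_zero_nhds_one.comp hs)
    (tendsto_natCast_div_pow_sub_two_mul_log_sub_one hb)).congr' ?_
  filter_upwards [eventually_ne_atTop 0, hx.eventually_ne hb1'] with h hh hq
  rw [sum_range_pow_mul_exp_neg_mul_div (Nat.two_mul_log_le_self b h) hh hq,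
    clusterError_eq_expansion hb1' (Nat.cast_ne_zero.2 hh) hq
      (sub_pos.2 (one_lt_pow₀ hb1 (Nat.succ_ne_zero _))).ne']

/-- Expected size of the root cluster of a complete `b`-ary subtree of height `h - m`,
`m = 2⌊log_b h⌋`, under percolation with parameter `p_h = e^{-c/h}`:
`E[C_{h,1}] = n_{h,1} e^{-c} + n_{h,1} h⁻¹ (b-1)⁻¹ c e^{-c} + n_{h,1} m h⁻¹ c e^{-c}
             + o(n_{h,1} h⁻¹)` as `h → ∞`. -/
theorem regular_subtree_cluster_expectation (b : ℕ) (hb : 2 ≤ b) (c : ℝ) (hc : 0 < c) :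
    Tendsto (fun h : ℕ =>
        ((∑ k ∈ Finset.range (h - 2 * Nat.log b h + 1),
            (b : ℝ) ^ k * Real.exp (-c * k / h))
          - (((b : ℝ) ^ (h - 2 * Nat.log b h + 1) - 1) / (b - 1)) * Real.exp (-c)
          - (((b : ℝ) ^ (h - 2 * Nat.log b h + 1) - 1) / (b - 1)) * (h : ℝ)⁻¹
              * ((b : ℝ) - 1)⁻¹ * c * Real.exp (-c)
          - (((b : ℝ) ^ (h - 2 * Nat.log b h + 1) - 1) / (b - 1))
              * (2 * Nat.log b h : ℕ) * (h : ℝ)⁻¹ * c * Real.exp (-c))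
        / ((((b : ℝ) ^ (h - 2 * Nat.log b h + 1) - 1) / (b - 1)) * (h : ℝ)⁻¹))
      atTop (𝓝 0) :=
  regular_subtree_cluster_expectation_general b hb c
end
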